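/- Let (Ω, F, P) be a probability space, let (X_n) and (Y_n) be sequences of real-valued random variables on Ω such that X_n and Y_n are independent for each n, let (a_n) be positive reals with a_n → ∞, and let 0 < λ < β. Set σ² = λ⁻¹ − β⁻¹, I(x) = x²/(2σ²), J(x) = λx²/2, K(x) = βx²/2. Assume the laws of Y_n satisfy the LDP with speed (a_n) and rate function K, and the laws of X_n + Y_n satisfy the LDP with speed (a_n) and rate function J. Then the laws of X_n satisfy the LDP with speed (a_n) and rate function I. -/

import Mathlib

/-!
The law of `X_n + Y_n` is the convolution of the laws of `X_n` and `Y_n`, and with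
`σ² = λ⁻¹ - β⁻¹`
  `x² / (2σ²) + β y² / 2 = λ (x + y)² / 2 + (λ x - (β - λ) y)² / (2 (β - λ))`,
so `J` is the infimal convolution of `I` and `K`, attained exactly on the line
`λ x = (β - λ) y`.

Upper bound: `P(X ∈ A) P(Y ∈ B) ≤ P(X + Y ∈ A + B)`; taking for `B` a small ball around the
optimal `y = λ m / (β - λ)` bounds `P(|X| ≥ m)` by the rate `I m`, hence every closed set.

Lower bound: `X + Y` lies near `x₀ + t`, `t = λ x₀ / (β - λ)`, with rate `J (x₀ + t) = I x₀ + K t`.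
On the part of this event where `X` is far from `x₀` the rate is strictly larger (the gap above
on compact sets, the upper bound for `X` on the tails), and on the rest the probability is at
most `P(X near x₀) P(Y near t)`, where `Y` contributes the rate `K t`.
-/

open MeasureTheory ProbabilityTheory Filter Set

/-- A sequence of Borel probability measures on `ℝ` satisfies the LDP with speed `a`
and rate function `I`. Logarithms of measures are taken via `ENNReal.log` (valued in
`EReal`, so that `log 0 = ⊥`), and infima of the rate function are taken in `EReal`. -/
def SatisfiesLDP (μ : ℕ → Measure ℝ) (a : ℕ → ℝ) (I : ℝ → ℝ) : Prop :=
  (∀ C : Set ℝ, IsClosed C →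
    limsup (fun n => (((a n)⁻¹ : ℝ) : EReal) * ENNReal.log (μ n C)) atTop
      ≤ -(⨅ x ∈ C, (I x : EReal))) ∧
  (∀ O : Set ℝ, IsOpen O →
    -(⨅ x ∈ O, (I x : EReal))
      ≤ liminf (fun n => (((a n)⁻¹ : ℝ) : EReal) * ENNReal.log (μ n O)) atTop)

open scoped ENNReal Pointwise Topology
open Metric

def LDPUpperBound (μ : ℕ → Measure ℝ) (a : ℕ → ℝ) (I : ℝ → ℝ) : Prop :=
  ∀ C : Set ℝ, IsClosed C →
    limsup (fun n => (((a n)⁻¹ : ℝ) : EReal) * ENNReal.log (μ n C)) atTop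
      ≤ -(⨅ x ∈ C, (I x : EReal))

def LDPLowerBound (μ : ℕ → Measure ℝ) (a : ℕ → ℝ) (I : ℝ → ℝ) : Prop :=
  ∀ O : Set ℝ, IsOpen O →
    -(⨅ x ∈ O, (I x : EReal))
      ≤ liminf (fun n => (((a n)⁻¹ : ℝ) : EReal) * ENNReal.log (μ n O)) atTop

/- `LogRateLE a p c` and `LogRateGE a p c` are `limsup (log p n) / a n ≤ c` and
`c ≤ liminf (log p n) / a n` (see `logRateLE_iff_limsup_le`), in `ε`-form. -/
def LogRateLE (a : ℕ → ℝ) (p : ℕ → ℝ≥0∞) (c : ℝ) : Prop :=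
  ∀ ε > 0, ∀ᶠ n in atTop, p n ≤ ENNReal.ofReal (Real.exp (a n * (c + ε)))

def LogRateGE (a : ℕ → ℝ) (p : ℕ → ℝ≥0∞) (c : ℝ) : Prop :=
  ∀ ε > 0, ∀ᶠ n in atTop, ENNReal.ofReal (Real.exp (a n * (c - ε))) ≤ p n

section LogRate

variable {a : ℕ → ℝ} {p q r s : ℕ → ℝ≥0∞} {c d e : ℝ}

lemma ofReal_exp_add (x y : ℝ) :
    ENNReal.ofReal (Real.exp (x + y)) =
      ENNReal.ofReal (Real.exp x) * ENNReal.ofReal (Real.exp y) := by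
  rw [Real.exp_add, ENNReal.ofReal_mul (Real.exp_pos x).le]

lemma ofReal_exp_ne_zero (x : ℝ) : ENNReal.ofReal (Real.exp x) ≠ 0 :=
  (ENNReal.ofReal_pos.2 (Real.exp_pos x)).ne'

lemma eventually_le_ofReal_exp_mul (ha : Tendsto a atTop atTop) {η : ℝ} (hη : 0 < η)
    {C : ℝ≥0∞} (hC : C ≠ ∞) : ∀ᶠ n in atTop, C ≤ ENNReal.ofReal (Real.exp (a n * η)) :=
  ((ENNReal.tendsto_ofReal_atTop.comp (Real.tendsto_exp_atTop.comp
    (ha.atTop_mul_const hη))).eventually_const_lt hC.lt_top).mono fun _ h => h.le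

lemma inv_mul_log_le_iff {x : ℝ} (hx : 0 < x) (p : ℝ≥0∞) (y : ℝ) :
    ((x⁻¹ : ℝ) : EReal) * ENNReal.log p ≤ y ↔ p ≤ ENNReal.ofReal (Real.exp (x * y)) := by
  rw [EReal.coe_inv, ← EReal.div_eq_inv_mul,
    EReal.div_le_iff_le_mul (EReal.coe_pos.2 hx) (EReal.coe_ne_top x), ← EReal.coe_mul,
    ← ENNReal.log_le_log_iff, ENNReal.log_ofReal_of_pos (Real.exp_pos _), Real.log_exp]

lemma le_inv_mul_log_iff {x : ℝ} (hx : 0 < x) (p : ℝ≥0∞) (y : ℝ) :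
    y ≤ ((x⁻¹ : ℝ) : EReal) * ENNReal.log p ↔ ENNReal.ofReal (Real.exp (x * y)) ≤ p := by
  rw [EReal.coe_inv, ← EReal.div_eq_inv_mul,
    EReal.le_div_iff_mul_le (EReal.coe_pos.2 hx) (EReal.coe_ne_top x), mul_comm,
    ← EReal.coe_mul, ← ENNReal.log_le_log_iff, ENNReal.log_ofReal_of_pos (Real.exp_pos _),
    Real.log_exp]

lemma logRateLE_iff_limsup_le (ha : Tendsto a atTop atTop) :
    LogRateLE a p c ↔
      limsup (fun n => (((a n)⁻¹ : ℝ) : EReal) * ENNReal.log (p n)) atTop ≤ c := by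
  have hpos := ha.eventually_gt_atTop 0
  constructor
  · intro h
    refine EReal.le_of_forall_lt_iff_le.1 fun z hz => limsup_le_of_le (by isBoundedDefault) ?_
    filter_upwards [h _ (sub_pos.2 (EReal.coe_lt_coe_iff.1 hz)), hpos] with n hn han
    rw [inv_mul_log_le_iff han]
    simpa using hn
  · intro h ε hε
    have hlt : limsup (fun n => (((a n)⁻¹ : ℝ) : EReal) * ENNReal.log (p n)) atTop
        < ((c + ε : ℝ) : EReal) := h.trans_lt (EReal.coe_lt_coe_iff.2 (by linarith))
    filter_upwards [eventually_lt_of_limsup_lt hlt, hpos] with n hn han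
    exact (inv_mul_log_le_iff han _ _).1 hn.le

lemma logRateGE_iff_le_liminf (ha : Tendsto a atTop atTop) :
    LogRateGE a p c ↔
      c ≤ liminf (fun n => (((a n)⁻¹ : ℝ) : EReal) * ENNReal.log (p n)) atTop := by
  have hpos := ha.eventually_gt_atTop 0
  constructor
  · intro h
    refine EReal.ge_of_forall_gt_iff_ge.1 fun z hz => le_liminf_of_le (by isBoundedDefault) ?_
    filter_upwards [h _ (sub_pos.2 (EReal.coe_lt_coe_iff.1 hz)), hpos] with n hn han
    rw [le_inv_mul_log_iff han]
    simpa using hn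
  · intro h ε hε
    have hlt : ((c - ε : ℝ) : EReal)
        < liminf (fun n => (((a n)⁻¹ : ℝ) : EReal) * ENNReal.log (p n)) atTop :=
      (EReal.coe_lt_coe_iff.2 (by linarith)).trans_le h
    filter_upwards [eventually_lt_of_lt_liminf hlt, hpos] with n hn han
    exact (le_inv_mul_log_iff han _ _).1 hn.le

lemma LogRateLE.of_le (h : LogRateLE a p c) (hqp : ∀ n, q n ≤ p n) : LogRateLE a q c :=
  fun ε hε => (h ε hε).mono fun n hn => (hqp n).trans hn

lemma LogRateGE.of_le (h : LogRateGE a p c) (hpq : ∀ n, p n ≤ q n) : LogRateGE a q c :=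
  fun ε hε => (h ε hε).mono fun n hn => hn.trans (hpq n)

lemma LogRateLE.mono (ha : Tendsto a atTop atTop) (h : LogRateLE a p c) (hcd : c ≤ d) :
    LogRateLE a p d := by
  intro ε hε
  filter_upwards [h ε hε, ha.eventually_ge_atTop 0] with n hn han
  exact hn.trans (by gcongr)

lemma LogRateGE.mono (ha : Tendsto a atTop atTop) (h : LogRateGE a p c) (hdc : d ≤ c) :
    LogRateGE a p d := by
  intro ε hε
  filter_upwards [h ε hε, ha.eventually_ge_atTop 0] with n hn han
  exact le_trans (by gcongr) hn

lemma LogRateLE.of_forall_pos (h : ∀ ε > 0, LogRateLE a p (c + ε)) : LogRateLE a p c :=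
  fun ε hε => by simpa only [add_assoc, add_halves] using h (ε / 2) (half_pos hε) _ (half_pos hε)

lemma LogRateGE.of_forall_pos (h : ∀ ε > 0, LogRateGE a p (c - ε)) : LogRateGE a p c :=
  fun ε hε => by
    simpa only [sub_sub, add_halves] using h (ε / 2) (half_pos hε) _ (half_pos hε)

lemma logRateLE_zero_of_le_one (ha : Tendsto a atTop atTop) (hp : ∀ n, p n ≤ 1) :
    LogRateLE a p 0 := by
  intro ε hε
  filter_upwards [ha.eventually_ge_atTop 0] with n han
  exact (hp n).trans (ENNReal.one_le_ofReal.2 (Real.one_le_exp (by positivity)))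

lemma LogRateLE.add (ha : Tendsto a atTop atTop) (hp : LogRateLE a p c) (hq : LogRateLE a q c) :
    LogRateLE a (fun n => p n + q n) c := by
  intro ε hε
  filter_upwards [hp _ (half_pos hε), hq _ (half_pos hε),
    eventually_le_ofReal_exp_mul ha (half_pos hε) (C := 2) ENNReal.ofNat_ne_top] with n hp hq h2
  calc p n + q n ≤ 2 * ENNReal.ofReal (Real.exp (a n * (c + ε / 2))) := by
        rw [two_mul]; exact add_le_add hp hq
    _ ≤ ENNReal.ofReal (Real.exp (a n * (ε / 2))) *
          ENNReal.ofReal (Real.exp (a n * (c + ε / 2))) := by gcongr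
    _ = ENNReal.ofReal (Real.exp (a n * (c + ε))) := by rw [← ofReal_exp_add]; congr 2; ring

lemma LogRateLE.mul (hp : LogRateLE a p c) (hq : LogRateLE a q d) :
    LogRateLE a (fun n => p n * q n) (c + d) := by
  intro ε hε
  filter_upwards [hp _ (half_pos hε), hq _ (half_pos hε)] with n hp hq
  calc p n * q n ≤ ENNReal.ofReal (Real.exp (a n * (c + ε / 2))) *
          ENNReal.ofReal (Real.exp (a n * (d + ε / 2))) := mul_le_mul' hp hq
    _ = ENNReal.ofReal (Real.exp (a n * (c + d + ε))) := by rw [← ofReal_exp_add]; congr 2; ring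

lemma LogRateLE.of_mul_le (hq : LogRateGE a q d) (hr : LogRateLE a r e)
    (h : ∀ n, p n * q n ≤ r n) : LogRateLE a p (e - d) := by
  intro ε hε
  filter_upwards [hq _ (half_pos hε), hr _ (half_pos hε)] with n hq hr
  refine (ENNReal.mul_le_mul_iff_left (ofReal_exp_ne_zero (a n * (d - ε / 2)))
    ENNReal.ofReal_ne_top).1 ?_
  calc p n * ENNReal.ofReal (Real.exp (a n * (d - ε / 2))) ≤ p n * q n := by gcongr
    _ ≤ ENNReal.ofReal (Real.exp (a n * (e + ε / 2))) := (h n).trans hr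
    _ = _ := by rw [← ofReal_exp_add]; congr 2; ring

lemma LogRateGE.of_le_mul_add (ha : Tendsto a atTop atTop) (hp : LogRateGE a p c)
    (hr : LogRateLE a r d) (hs : LogRateLE a s e) (hec : e < c)
    (h : ∀ n, p n ≤ q n * r n + s n) : LogRateGE a q (c - d) := by
  intro ε hε
  set η := min (ε / 3) ((c - e) / 4)
  have hη : 0 < η := lt_min (by positivity) (by linarith)
  have hη₁ : η ≤ ε / 3 := min_le_left _ _
  have hη₂ : η ≤ (c - e) / 4 := min_le_right _ _
  filter_upwards [hp η hη, hr η hη, hs η hη, ha.eventually_ge_atTop 0,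
    eventually_le_ofReal_exp_mul ha hη (C := 2) ENNReal.ofNat_ne_top,
    eventually_le_ofReal_exp_mul ha (show 0 < c - e - 2 * η by linarith) (C := 2)
      ENNReal.ofNat_ne_top] with n hp hr hs han h2 h2'
  set u := ENNReal.ofReal (Real.exp (a n * (c - η)))
  have hsu : 2 * s n ≤ u :=
    calc 2 * s n ≤ ENNReal.ofReal (Real.exp (a n * (c - e - 2 * η))) *
          ENNReal.ofReal (Real.exp (a n * (e + η))) := mul_le_mul' h2' hs
      _ = u := by rw [← ofReal_exp_add]; congr 2; ring
  have hu : u ≤ 2 * (q n * r n) := by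
    refine ENNReal.le_of_add_le_add_right (a := u) ENNReal.ofReal_ne_top ?_
    calc u + u = 2 * u := (two_mul u).symm
      _ ≤ 2 * (q n * r n + s n) := by gcongr; exact hp.trans (h n)
      _ ≤ 2 * (q n * r n) + u := by rw [mul_add]; gcongr
  refine le_trans (b := ENNReal.ofReal (Real.exp (a n * (c - d - 3 * η)))) (by gcongr; linarith)
    ((ENNReal.mul_le_mul_iff_left (ofReal_exp_ne_zero (a n * (d + 2 * η)))
      ENNReal.ofReal_ne_top).1 ?_)
  calc ENNReal.ofReal (Real.exp (a n * (c - d - 3 * η))) *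
        ENNReal.ofReal (Real.exp (a n * (d + 2 * η))) = u := by
        rw [← ofReal_exp_add]; congr 2; ring
    _ ≤ 2 * (q n * ENNReal.ofReal (Real.exp (a n * (d + η)))) := hu.trans (by gcongr)
    _ ≤ ENNReal.ofReal (Real.exp (a n * η)) *
          (q n * ENNReal.ofReal (Real.exp (a n * (d + η)))) := by gcongr
    _ = q n * ENNReal.ofReal (Real.exp (a n * (d + 2 * η))) := by
        rw [mul_left_comm, ← ofReal_exp_add]; congr 3; ring

end LogRate

section LDPBounds

variable {μ : ℕ → Measure ℝ} {a : ℕ → ℝ} {R : ℝ → ℝ}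

lemma LDPUpperBound.logRateLE (h : LDPUpperBound μ a R) (ha : Tendsto a atTop atTop)
    {C : Set ℝ} (hC : IsClosed C) {c : ℝ} (hc : ∀ x ∈ C, c ≤ R x) :
    LogRateLE a (fun n => μ n C) (-c) := by
  refine (logRateLE_iff_limsup_le ha).2 ((h C hC).trans ?_)
  rw [EReal.coe_neg, EReal.neg_le_neg_iff]
  exact le_iInf₂ fun x hx => EReal.coe_le_coe_iff.2 (hc x hx)

lemma LDPLowerBound.logRateGE (h : LDPLowerBound μ a R) (ha : Tendsto a atTop atTop)
    {O : Set ℝ} (hO : IsOpen O) {x : ℝ} (hx : x ∈ O) :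
    LogRateGE a (fun n => μ n O) (-R x) := by
  refine (logRateGE_iff_le_liminf ha).2 (le_trans ?_ (h O hO))
  rw [EReal.coe_neg, EReal.neg_le_neg_iff]
  exact iInf₂_le x hx

lemma ldpUpperBound_of_logRateLE (ha : Tendsto a atTop atTop)
    (h : ∀ C : Set ℝ, IsClosed C → ∀ c : ℝ, (∀ x ∈ C, c ≤ R x) →
      LogRateLE a (fun n => μ n C) (-c)) :
    LDPUpperBound μ a R := by
  intro C hC
  rw [EReal.le_neg]
  refine EReal.ge_of_forall_gt_iff_ge.1 fun c hc => ?_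
  have hcR : ∀ x ∈ C, c ≤ R x := fun x hx =>
    EReal.coe_le_coe_iff.1 (hc.le.trans (iInf₂_le x hx))
  rw [EReal.le_neg, ← EReal.coe_neg]
  exact (logRateLE_iff_limsup_le ha).1 (h C hC c hcR)

lemma ldpLowerBound_of_logRateGE (ha : Tendsto a atTop atTop)
    (h : ∀ x, ∀ δ > 0, LogRateGE a (fun n => μ n (ball x δ)) (-R x)) :
    LDPLowerBound μ a R := by
  intro O hO
  rw [EReal.neg_le]
  refine le_iInf₂ fun x hx => ?_
  rw [EReal.neg_le, ← EReal.coe_neg]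
  obtain ⟨δ, hδ, hball⟩ := Metric.isOpen_iff.1 hO x hx
  exact (logRateGE_iff_le_liminf ha).1 ((h x δ hδ).of_le fun n => measure_mono hball)

end LDPBounds

lemma LowerSemicontinuous.exists_closedBall_lt {α : Type*} [PseudoMetricSpace α] {f : α → ℝ}
    (hf : LowerSemicontinuous f) (x : α) {ε : ℝ} (hε : 0 < ε) :
    ∃ r > 0, ∀ y ∈ closedBall x r, f x - ε < f y :=
  nhds_basis_closedBall.mem_iff.1 (hf x _ (sub_lt_self _ hε))

section Convolution

variable {M : Type*} [MeasurableSpace M] {μ ν : Measure M} [SFinite ν] {A B C : Set M}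

lemma mul_le_conv_apply [AddMonoid M] [MeasurableAdd₂ M] (h : A + B ⊆ C) :
    μ A * ν B ≤ (μ ∗ ν) C :=
  calc μ A * ν B = μ.prod ν (A ×ˢ B) := (Measure.prod_prod A B).symm
    _ ≤ μ.prod ν ((fun p : M × M => p.1 + p.2) ⁻¹' C) :=
        measure_mono fun _ hp => h (Set.add_mem_add hp.1 hp.2)
    _ ≤ (μ ∗ ν) C := Measure.le_map_apply measurable_add.aemeasurable C

lemma conv_apply_le [AddCommGroup M] [MeasurableAdd₂ M] (hC : MeasurableSet C)
    (h : ∀ x ∈ A, ∀ w ∈ C, w - x ∈ B) :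
    (μ ∗ ν) C ≤ μ A * ν B + μ.prod ν {p | p.1 ∉ A ∧ p.1 + p.2 ∈ C} := by
  rw [Measure.conv, Measure.map_apply measurable_add hC, ← Measure.prod_prod]
  refine (measure_mono fun p hp => ?_).trans (measure_union_le _ _)
  by_cases hpA : p.1 ∈ A
  · exact Or.inl ⟨hpA, by simpa using h _ hpA _ hp⟩
  · exact Or.inr ⟨hpA, hp⟩

end Convolution

lemma conv_ball_le {μ ν : Measure ℝ} [SFinite ν] (x₀ t r κ : ℝ) :
    (μ ∗ ν) (ball (x₀ + t) κ) ≤ μ (ball x₀ r) * ν (closedBall t (r + κ)) +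
      μ.prod ν {p | p.1 ∉ ball x₀ r ∧ p.1 + p.2 ∈ ball (x₀ + t) κ} := by
  refine conv_apply_le isOpen_ball.measurableSet fun x hx w hw => ?_
  rw [mem_ball, Real.dist_eq] at hx hw
  rw [mem_closedBall, Real.dist_eq]
  calc |w - x - t| = |(w - (x₀ + t)) - (x - x₀)| := by ring_nf
    _ ≤ |w - (x₀ + t)| + |x - x₀| := abs_sub _ _
    _ ≤ r + κ := by linarith

noncomputable def quadRate (c x : ℝ) : ℝ := c * x ^ 2 / 2

@[fun_prop]
lemma continuous_quadRate (c : ℝ) : Continuous (quadRate c) := by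
  unfold quadRate; fun_prop

lemma quadRate_le_quadRate {c x y : ℝ} (hc : 0 ≤ c) (h : |x| ≤ |y|) :
    quadRate c x ≤ quadRate c y := by
  have := sq_le_sq.2 h
  unfold quadRate; gcongr

lemma le_quadRate_iff {γ c x : ℝ} (hγ : 0 < γ) : c ≤ quadRate γ x ↔ √(2 * c / γ) ≤ |x| := by
  rw [Real.sqrt_le_left (abs_nonneg x), sq_abs, div_le_iff₀ hγ, quadRate]
  constructor <;> intro h <;> linarith

lemma quadRate_add_quadRate {lam β : ℝ} (hlam : lam ≠ 0) (hβ : β ≠ 0) (hne : β - lam ≠ 0)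
    (x y : ℝ) :
    quadRate (lam⁻¹ - β⁻¹)⁻¹ x + quadRate β y =
      quadRate lam (x + y) + (lam * x - (β - lam) * y) ^ 2 / (2 * (β - lam)) := by
  have : (lam⁻¹ - β⁻¹)⁻¹ = lam * β / (β - lam) := by field_simp
  rw [this]
  unfold quadRate
  field_simp
  ring

lemma inv_inv_sub_inv_pos {lam β : ℝ} (hlam : 0 < lam) (hlamβ : lam < β) :
    0 < (lam⁻¹ - β⁻¹)⁻¹ :=
  inv_pos.2 (sub_pos.2 ((inv_lt_inv₀ (hlam.trans hlamβ) hlam).2 hlamβ))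

lemma quadRate_add_of_mul_eq {lam β x t : ℝ} (hlam : lam ≠ 0) (hβ : β ≠ 0) (hne : β - lam ≠ 0)
    (ht : (β - lam) * t = lam * x) :
    quadRate lam (x + t) = quadRate (lam⁻¹ - β⁻¹)⁻¹ x + quadRate β t := by
  rw [quadRate_add_quadRate hlam hβ hne, ht, sub_self]
  ring

lemma quadRate_add_le_of_le_abs_sub {lam β x₀ t δ x y : ℝ} (hlam : 0 < lam) (hlamβ : lam < β)
    (ht : (β - lam) * t = lam * x₀) (hx : δ ≤ |x - x₀|) (hw : |x + y - (x₀ + t)| ≤ δ / 2) :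
    quadRate lam (x + y) + (β * δ / 2) ^ 2 / (2 * (β - lam)) ≤
      quadRate (lam⁻¹ - β⁻¹)⁻¹ x + quadRate β y := by
  have hβlam : 0 < β - lam := sub_pos.2 hlamβ
  have hδ : 0 ≤ δ := by linarith [abs_nonneg (x + y - (x₀ + t))]
  have hgap : β * δ / 2 ≤ |lam * x - (β - lam) * y| :=
    calc β * δ / 2 ≤ β * |x - x₀| - (β - lam) * |x + y - (x₀ + t)| := by nlinarith
      _ = |β * (x - x₀)| - |(β - lam) * (x + y - (x₀ + t))| := by
        rw [abs_mul, abs_mul, abs_of_pos (hlam.trans hlamβ), abs_of_pos hβlam]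
      _ ≤ |β * (x - x₀) - (β - lam) * (x + y - (x₀ + t))| := abs_sub_abs_le_abs_sub _ _
      _ = |lam * x - (β - lam) * y| := by congr 1; linear_combination ht
  have hsq : (β * δ / 2) ^ 2 ≤ (lam * x - (β - lam) * y) ^ 2 := by
    rw [← sq_abs (lam * x - _)]
    exact pow_le_pow_left₀ (by nlinarith [hlam.trans hlamβ]) hgap 2
  rw [quadRate_add_quadRate hlam.ne' (hlam.trans hlamβ).ne' hβlam.ne']
  exact (add_le_add_iff_left _).2 (div_le_div_of_nonneg_right hsq (by linarith))

lemma halfLine_add_ball_subset {m s t δ : ℝ} (hs : |s| = 1) :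
    {x | m ≤ s * x} + ball (s * t) δ ⊆ {w | m + t - δ ≤ |w|} := by
  rintro _ ⟨x, hx : m ≤ s * x, y, hy, rfl⟩
  rw [mem_ball, Real.dist_eq] at hy
  have hs2 : s ^ 2 = 1 := by rw [← sq_abs, hs, one_pow]
  have hsy : |s * y - t| < δ := by
    rwa [show s * y - t = s * (y - s * t) by linear_combination t * hs2, abs_mul, hs, one_mul]
  calc m + t - δ ≤ s * (x + y) := by linarith [neg_abs_le (s * y - t)]
    _ ≤ |s * (x + y)| := le_abs_self _
    _ = |x + y| := by rw [abs_mul, hs, one_mul]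

section UpperBound

variable {μ ν : ℕ → Measure ℝ} {a : ℕ → ℝ} {lam β : ℝ}

lemma logRateLE_of_add_subset [∀ n, SFinite (ν n)] (ha : Tendsto a atTop atTop)
    {J K : ℝ → ℝ} (hconv : LDPUpperBound (fun n => μ n ∗ ν n) a J) (hν : LDPLowerBound ν a K)
    {A B C : Set ℝ} (hB : IsOpen B) (hC : IsClosed C) (hABC : A + B ⊆ C)
    {c t : ℝ} (hc : ∀ w ∈ C, c ≤ J w) (ht : t ∈ B) :
    LogRateLE a (fun n => μ n A) (-c + K t) := by
  rw [← sub_neg_eq_add]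
  exact LogRateLE.of_mul_le (hν.logRateGE ha hB ht) (hconv.logRateLE ha hC hc)
    fun n => mul_le_conv_apply hABC

lemma logRateLE_halfLine [∀ n, SFinite (ν n)] (ha : Tendsto a atTop atTop)
    (hconv : LDPUpperBound (fun n => μ n ∗ ν n) a (quadRate lam))
    (hν : LDPLowerBound ν a (quadRate β)) (hlam : 0 < lam) (hlamβ : lam < β)
    {m s : ℝ} (hm : 0 < m) (hs : |s| = 1) :
    LogRateLE a (fun n => μ n {x | m ≤ s * x}) (-quadRate (lam⁻¹ - β⁻¹)⁻¹ m) := by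
  have hβlam : 0 < β - lam := sub_pos.2 hlamβ
  set t := lam * m / (β - lam)
  have ht : 0 < t := div_pos (mul_pos hlam hm) hβlam
  have hs2 : s ^ 2 = 1 := by rw [← sq_abs, hs, one_pow]
  have hJ := quadRate_add_of_mul_eq hlam.ne' (hlam.trans hlamβ).ne' hβlam.ne'
    (mul_div_cancel₀ (lam * m) hβlam.ne')
  refine LogRateLE.of_forall_pos fun ε hε => ?_
  obtain ⟨η, hη, hJη⟩ := (continuous_quadRate lam).lowerSemicontinuous.exists_closedBall_lt
    (m + t) hε
  set δ := min η (m + t)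
  have hδ : 0 < δ := lt_min hη (by positivity)
  have hδJ := hJη (m + t - δ) (by
    rw [mem_closedBall, Real.dist_eq, sub_sub_cancel_left, abs_neg, abs_of_pos hδ]
    exact min_le_left _ _)
  have hKst : quadRate β (s * t) = quadRate β t := by
    simp only [quadRate, mul_pow, hs2, one_mul]
  refine (hKst ▸ logRateLE_of_add_subset ha hconv hν isOpen_ball
    (isClosed_le continuous_const continuous_abs) (halfLine_add_ball_subset hs)
    (c := quadRate lam (m + t - δ)) (fun w hw => quadRate_le_quadRate hlam.le ?_)
    (mem_ball_self hδ)).mono ha ?_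
  · rw [abs_of_nonneg (sub_nonneg.2 (min_le_right η (m + t)))]
    exact hw
  · linarith

lemma logRateLE_abs_ge [∀ n, SFinite (ν n)] (ha : Tendsto a atTop atTop)
    (hconv : LDPUpperBound (fun n => μ n ∗ ν n) a (quadRate lam))
    (hν : LDPLowerBound ν a (quadRate β)) (hlam : 0 < lam) (hlamβ : lam < β)
    {m : ℝ} (hm : 0 < m) :
    LogRateLE a (fun n => μ n {x | m ≤ |x|}) (-quadRate (lam⁻¹ - β⁻¹)⁻¹ m) := by
  refine ((logRateLE_halfLine ha hconv hν hlam hlamβ hm (s := 1) (by simp)).add ha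
    (logRateLE_halfLine ha hconv hν hlam hlamβ hm (s := -1) (by simp))).of_le fun n => ?_
  refine (measure_mono fun x hx => ?_).trans (measure_union_le _ _)
  simpa [le_abs] using hx

lemma logRateLE_of_le_quadRate [∀ n, IsProbabilityMeasure (μ n)] [∀ n, SFinite (ν n)]
    (ha : Tendsto a atTop atTop)
    (hconv : LDPUpperBound (fun n => μ n ∗ ν n) a (quadRate lam))
    (hν : LDPLowerBound ν a (quadRate β)) (hlam : 0 < lam) (hlamβ : lam < β)
    {A : Set ℝ} {c : ℝ} (hc : ∀ x ∈ A, c ≤ quadRate (lam⁻¹ - β⁻¹)⁻¹ x) :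
    LogRateLE a (fun n => μ n A) (-c) := by
  rcases le_or_gt c 0 with hc0 | hc0
  · exact (logRateLE_zero_of_le_one ha fun n => prob_le_one).mono ha (by linarith)
  have hγ := inv_inv_sub_inv_pos hlam hlamβ
  set m := √(2 * c / (lam⁻¹ - β⁻¹)⁻¹)
  have hm : 0 < m := Real.sqrt_pos.2 (by positivity)
  refine ((logRateLE_abs_ge ha hconv hν hlam hlamβ hm).of_le fun n =>
    measure_mono fun x hx => (le_quadRate_iff hγ).1 (hc x hx)).mono ha ?_
  exact neg_le_neg ((le_quadRate_iff hγ).2 (le_abs_self m))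

end UpperBound

section LowerBound

variable {μ ν : ℕ → Measure ℝ} {a : ℕ → ℝ} {lam β : ℝ}

lemma logRateLE_prod_of_isCompact [∀ n, SFinite (ν n)] (ha : Tendsto a atTop atTop)
    {I K : ℝ → ℝ} (hμ : LDPUpperBound μ a I) (hν : LDPUpperBound ν a K)
    (hI : LowerSemicontinuous I) (hK : LowerSemicontinuous K)
    {F : Set (ℝ × ℝ)} (hF : IsCompact F) {c : ℝ} (hc : ∀ p ∈ F, c ≤ I p.1 + K p.2) :
    LogRateLE a (fun n => (μ n).prod (ν n) F) (-c) := by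
  refine LogRateLE.of_forall_pos fun ε hε => ?_
  refine hF.induction_on (p := fun S => LogRateLE a (fun n => (μ n).prod (ν n) S) (-c + ε))
    ?_ ?_ ?_ ?_
  · exact fun _ _ => Eventually.of_forall fun _ => by simp
  · exact fun S T hST hT => hT.of_le fun _ => measure_mono hST
  · exact fun S T hS hT => (hS.add ha hT).of_le fun _ => measure_union_le S T
  intro p hp
  obtain ⟨r₁, hr₁, hIr⟩ := hI.exists_closedBall_lt p.1 (half_pos hε)
  obtain ⟨r₂, hr₂, hKr⟩ := hK.exists_closedBall_lt p.2 (half_pos hε)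
  refine ⟨closedBall p.1 r₁ ×ˢ closedBall p.2 r₂, mem_nhdsWithin_of_mem_nhds
    (prod_mem_nhds (closedBall_mem_nhds _ hr₁) (closedBall_mem_nhds _ hr₂)), ?_⟩
  have hμr := hμ.logRateLE ha isClosed_closedBall fun x hx => (hIr x hx).le
  have hνr := hν.logRateLE ha isClosed_closedBall fun y hy => (hKr y hy).le
  refine ((hμr.mul hνr).of_le fun n => (Measure.prod_prod _ _).le).mono ha ?_
  linarith [hc p hp]

lemma logRateLE_prod_far [∀ n, IsProbabilityMeasure (ν n)] (ha : Tendsto a atTop atTop)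
    (hμ : LDPUpperBound μ a (quadRate (lam⁻¹ - β⁻¹)⁻¹)) (hν : LDPUpperBound ν a (quadRate β))
    (hlam : 0 < lam) (hlamβ : lam < β) {x₀ t r κ G : ℝ} (ht : (β - lam) * t = lam * x₀)
    (hκ : κ ≤ r / 2) (hG : 2 * G ≤ (β * r / 2) ^ 2 / (2 * (β - lam)))
    (hJ : ∀ w ∈ closedBall (x₀ + t) κ, quadRate lam (x₀ + t) - G < quadRate lam w) :
    LogRateLE a (fun n => (μ n).prod (ν n) {p | p.1 ∉ ball x₀ r ∧ p.1 + p.2 ∈ ball (x₀ + t) κ})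
      (-(quadRate lam (x₀ + t) + G)) := by
  have hγ := inv_inv_sub_inv_pos hlam hlamβ
  set c := quadRate lam (x₀ + t) + G
  set M := √(2 * c / (lam⁻¹ - β⁻¹)⁻¹)
  have htail : LogRateLE a (fun n => (μ n).prod (ν n) ({x | M ≤ |x|} ×ˢ univ)) (-c) :=
    (hμ.logRateLE ha (isClosed_le continuous_const continuous_abs)
      fun x hx => (le_quadRate_iff hγ).2 hx).of_le fun n => by
        rw [Measure.prod_prod, measure_univ, mul_one]
  set F := {p : ℝ × ℝ | |p.1| ≤ M ∧ r ≤ |p.1 - x₀| ∧ |p.1 + p.2 - (x₀ + t)| ≤ κ}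
  have hF : IsCompact F := by
    refine ((isCompact_Icc (a := -M) (b := M)).prod (isCompact_Icc (a := -(M + |x₀ + t| + κ))
      (b := M + |x₀ + t| + κ))).of_isClosed_subset ?_ ?_
    · simp only [F, ofPred_and]
      exact (isClosed_le (by fun_prop) continuous_const).inter
        ((isClosed_le continuous_const (by fun_prop)).inter
          (isClosed_le (by fun_prop) continuous_const))
    · rintro ⟨x, y⟩ ⟨hx, -, hw⟩
      rw [abs_le] at hx hw
      exact ⟨hx, by constructor <;> linarith [le_abs_self (x₀ + t), neg_abs_le (x₀ + t)]⟩
  have hcompact := logRateLE_prod_of_isCompact ha hμ hν (continuous_quadRate _).lowerSemicontinuous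
    (continuous_quadRate _).lowerSemicontinuous hF (c := c) fun p ⟨_, hfar, hclose⟩ => by
      have := quadRate_add_le_of_le_abs_sub hlam hlamβ ht hfar (hclose.trans hκ)
      have := hJ (p.1 + p.2) (by rwa [mem_closedBall, Real.dist_eq])
      linarith
  refine (htail.add ha hcompact).of_le fun n => (measure_mono ?_).trans (measure_union_le _ _)
  rintro ⟨x, y⟩ ⟨hfar, hclose⟩
  rw [mem_ball, Real.dist_eq, not_lt] at hfar
  rw [mem_ball, Real.dist_eq] at hclose
  by_cases hM : M ≤ |x|
  · exact Or.inl ⟨hM, trivial⟩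
  · exact Or.inr ⟨(not_le.1 hM).le, hfar, hclose.le⟩

lemma logRateGE_ball [∀ n, IsProbabilityMeasure (ν n)] (ha : Tendsto a atTop atTop)
    (hμ : LDPUpperBound μ a (quadRate (lam⁻¹ - β⁻¹)⁻¹)) (hν : LDPUpperBound ν a (quadRate β))
    (hconv : LDPLowerBound (fun n => μ n ∗ ν n) a (quadRate lam)) (hlam : 0 < lam)
    (hlamβ : lam < β) (x₀ : ℝ) {δ : ℝ} (hδ : 0 < δ) :
    LogRateGE a (fun n => μ n (ball x₀ δ)) (-quadRate (lam⁻¹ - β⁻¹)⁻¹ x₀) := by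
  have hβlam : 0 < β - lam := sub_pos.2 hlamβ
  set t := lam * x₀ / (β - lam)
  have ht : (β - lam) * t = lam * x₀ := mul_div_cancel₀ _ hβlam.ne'
  refine LogRateGE.of_forall_pos fun ε hε => ?_
  obtain ⟨η, hη, hKη⟩ := (continuous_quadRate β).lowerSemicontinuous.exists_closedBall_lt t hε
  set r := min δ (η / 2)
  have hr : 0 < r := lt_min hδ (half_pos hη)
  set G := (β * r / 2) ^ 2 / (2 * (β - lam)) / 2
  have hG : 0 < G :=
    half_pos (div_pos (pow_pos (by nlinarith [hlam.trans hlamβ]) 2) (by linarith))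
  obtain ⟨κ', hκ', hJκ⟩ :=
    (continuous_quadRate lam).lowerSemicontinuous.exists_closedBall_lt (x₀ + t) hG
  set κ := min κ' (r / 2)
  have hκ : 0 < κ := lt_min hκ' (half_pos hr)
  have hmain := hconv.logRateGE ha isOpen_ball (mem_ball_self (x := x₀ + t) hκ)
  have hY := hν.logRateLE ha (isClosed_closedBall (x := t) (ε := r + κ))
    fun y hy => (hKη y (closedBall_subset_closedBall (by
      linarith [min_le_right δ (η / 2), min_le_right κ' (r / 2)]) hy)).le
  have hbad := logRateLE_prod_far ha hμ hν hlam hlamβ ht (r := r) (κ := κ) (G := G)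
    (min_le_right _ _) (le_of_eq (by ring))
    fun w hw => hJκ w (closedBall_subset_closedBall (min_le_left _ _) hw)
  refine ((LogRateGE.of_le_mul_add ha hmain hY hbad (by linarith)
    fun n => conv_ball_le x₀ t r κ).of_le fun n =>
    measure_mono (ball_subset_ball (min_le_left _ _))).mono ha ?_
  linarith [quadRate_add_of_mul_eq hlam.ne' (hlam.trans hlamβ).ne' hβlam.ne' ht]

end LowerBound

theorem satisfiesLDP_of_conv {μ ν : ℕ → Measure ℝ} {a : ℕ → ℝ} {lam β : ℝ}
    [∀ n, IsProbabilityMeasure (μ n)] [∀ n, IsProbabilityMeasure (ν n)]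
    (ha : Tendsto a atTop atTop) (hlam : 0 < lam) (hlamβ : lam < β)
    (hν : SatisfiesLDP ν a (quadRate β))
    (hconv : SatisfiesLDP (fun n => μ n ∗ ν n) a (quadRate lam)) :
    SatisfiesLDP μ a (quadRate (lam⁻¹ - β⁻¹)⁻¹) := by
  obtain ⟨hνu, hνl⟩ := hν
  obtain ⟨hconvu, hconvl⟩ := hconv
  have hμu : LDPUpperBound μ a (quadRate (lam⁻¹ - β⁻¹)⁻¹) :=
    ldpUpperBound_of_logRateLE ha fun _ _ _ hc =>
      logRateLE_of_le_quadRate ha hconvu hνl hlam hlamβ hc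
  exact ⟨hμu, ldpLowerBound_of_logRateGE ha fun x _ hδ =>
    logRateGE_ball ha hμu hνu hconvl hlam hlamβ x hδ⟩

theorem stmt12_general {Ω : Type*} [MeasurableSpace Ω] (P : Measure Ω) [IsProbabilityMeasure P]
    (X Y : ℕ → Ω → ℝ) (hX : ∀ n, Measurable (X n)) (hY : ∀ n, Measurable (Y n))
    (hindep : ∀ n, IndepFun (X n) (Y n) P)
    (a : ℕ → ℝ) (ha' : Tendsto a atTop atTop)
    (lam β : ℝ) (hlam : 0 < lam) (hlamβ : lam < β)
    (σ2 : ℝ) (hσ2 : σ2 = lam⁻¹ - β⁻¹)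
    (I J K : ℝ → ℝ)
    (hI : I = fun x => x ^ 2 / (2 * σ2))
    (hJ : J = fun x => lam * x ^ 2 / 2)
    (hK : K = fun x => β * x ^ 2 / 2)
    (hLDPY : SatisfiesLDP (fun n => P.map (Y n)) a K)
    (hLDPXY : SatisfiesLDP (fun n => P.map (fun ω => X n ω + Y n ω)) a J) :
    SatisfiesLDP (fun n => P.map (X n)) a I := by
  subst hσ2 hI hJ hK
  have : ∀ n, IsProbabilityMeasure (P.map (X n)) := fun n =>
    Measure.isProbabilityMeasure_map (hX n).aemeasurable
  have : ∀ n, IsProbabilityMeasure (P.map (Y n)) := fun n =>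
    Measure.isProbabilityMeasure_map (hY n).aemeasurable
  have hconv : (fun n => P.map (fun ω => X n ω + Y n ω)) = fun n => P.map (X n) ∗ P.map (Y n) :=
    funext fun n => (hindep n).map_add_eq_map_conv_map (hX n) (hY n)
  have hrate : (fun x => x ^ 2 / (2 * (lam⁻¹ - β⁻¹))) = quadRate (lam⁻¹ - β⁻¹)⁻¹ :=
    funext fun x => by rw [quadRate, mul_comm (2 : ℝ), ← div_div, div_eq_inv_mul (x ^ 2)]
  rw [hrate]
  exact satisfiesLDP_of_conv ha' hlam hlamβ hLDPY (hconv ▸ hLDPXY)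

/-- Let `X_n, Y_n` be independent for each `n`, `a_n → ∞` positive,
`0 < λ < β`, `σ² = λ⁻¹ − β⁻¹`, `I x = x²/(2σ²)`, `J x = λx²/2`, `K x = βx²/2`. If the
laws of `Y_n` satisfy the LDP with speed `a_n` and rate `K`, and the laws of `X_n + Y_n`
satisfy the LDP with speed `a_n` and rate `J`, then the laws of `X_n` satisfy the LDP
with speed `a_n` and rate function `I`. -/
theorem stmt12 {Ω : Type*} [MeasurableSpace Ω] (P : Measure Ω) [IsProbabilityMeasure P]
    (X Y : ℕ → Ω → ℝ) (hX : ∀ n, Measurable (X n)) (hY : ∀ n, Measurable (Y n))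
    (hindep : ∀ n, IndepFun (X n) (Y n) P)
    (a : ℕ → ℝ) (ha : ∀ n, 0 < a n) (ha' : Tendsto a atTop atTop)
    (lam β : ℝ) (hlam : 0 < lam) (hlamβ : lam < β)
    (σ2 : ℝ) (hσ2 : σ2 = lam⁻¹ - β⁻¹)
    (I J K : ℝ → ℝ)
    (hI : I = fun x => x ^ 2 / (2 * σ2))
    (hJ : J = fun x => lam * x ^ 2 / 2)
    (hK : K = fun x => β * x ^ 2 / 2)
    (hLDPY : SatisfiesLDP (fun n => P.map (Y n)) a K)
    (hLDPXY : SatisfiesLDP (fun n => P.map (fun ω => X n ω + Y n ω)) a J) :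
    SatisfiesLDP (fun n => P.map (X n)) a I :=
  stmt12_general P X Y hX hY hindep a ha' lam β hlam hlamβ σ2 hσ2 I J K hI hJ hK hLDPY hLDPXY
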